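/- Let S ⊆ ℝ be a dense additive subgroup, ψ : S → ℝ a function, and h : ℝ → ℝ a nondecreasing, non-constant function satisfying h(x + s) = h(x) + ψ(s) for all x ∈ ℝ and s ∈ S. Then ψ is additive and there exists λ ≥ 0 such that ψ(s) = λ·s for all s ∈ S. -/
import Mathlib


theorem monotone_equivariant_linear (S : AddSubgroup ℝ) (hdense : Dense (S : Set ℝ))
    (ψ : ℝ → ℝ) (h : ℝ → ℝ) (hmono : Monotone h)
    (hnc : ¬ ∃ c : ℝ, ∀ x : ℝ, h x = c)
    (heq : ∀ x : ℝ, ∀ s ∈ S, h (x + s) = h x + ψ s) :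
    (∀ s ∈ S, ∀ t ∈ S, ψ (s + t) = ψ s + ψ t) ∧
    ∃ lam : ℝ, 0 ≤ lam ∧ ∀ s ∈ S, ψ s = lam * s := by
  -- ψ 0 = 0
  have hψ0 : ψ 0 = 0 := by
    have := heq 0 0 S.zero_mem
    simpa using this
  -- ψ s = h s - h 0
  have hval : ∀ s ∈ S, ψ s = h s - h 0 := by
    intro s hs
    have := heq 0 s hs
    simp at this
    linarith
  -- additivity
  have hadd : ∀ s ∈ S, ∀ t ∈ S, ψ (s + t) = ψ s + ψ t := by
    intro s hs t ht
    have h1 := heq 0 (s + t) (S.add_mem hs ht)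
    have h2 := heq s t ht
    have h3 := heq 0 s hs
    simp only [zero_add] at h1 h3
    linarith
  -- monotone on S
  have hmonoψ : ∀ a ∈ S, ∀ b ∈ S, a ≤ b → ψ a ≤ ψ b := by
    intro a ha b hb hab
    rw [hval a ha, hval b hb]
    have := hmono hab
    linarith
  have hψnonneg : ∀ s ∈ S, 0 ≤ s → 0 ≤ ψ s := by
    intro s hs h0s
    have := hmonoψ 0 S.zero_mem s hs h0s
    rwa [hψ0] at this
  -- ψ of negatives
  have hneg : ∀ s ∈ S, ψ (-s) = -ψ s := by
    intro s hs
    have := hadd s hs (-s) (S.neg_mem hs)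
    simp [hψ0] at this
    linarith
  -- ψ of natural multiples
  have hnat : ∀ n : ℕ, ∀ s ∈ S, ψ ((n : ℝ) * s) = n * ψ s := by
    intro n
    induction n with
    | zero => intro s hs; simp [hψ0]
    | succ k ih =>
      intro s hs
      have hks : (k : ℝ) * s ∈ S := by
        have := zsmul_mem hs (k : ℤ)
        simpa [zsmul_eq_mul] using this
      have := hadd ((k : ℝ) * s) hks s hs
      push_cast
      rw [add_mul, one_mul, this, ih s hs]
      ring
  -- ψ of integer multiples
  have hint : ∀ n : ℤ, ∀ s ∈ S, ψ ((n : ℝ) * s) = n * ψ s := by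
    intro n s hs
    obtain ⟨m, rfl | rfl⟩ := n.eq_nat_or_neg
    · exact_mod_cast hnat m s hs
    · have hms : (m : ℝ) * s ∈ S := by
        have := zsmul_mem hs (m : ℤ)
        simpa [zsmul_eq_mul] using this
      have h1 := hneg ((m : ℝ) * s) hms
      push_cast
      rw [neg_mul, h1, hnat m s hs]
      ring
  -- pick positive s₀ in S
  obtain ⟨s₀, hs₀S, hs₀⟩ : ∃ s₀ ∈ S, s₀ ∈ Set.Ioo (0 : ℝ) 1 :=
    hdense.exists_between (by norm_num)
  have hs₀pos : 0 < s₀ := hs₀.1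
  -- ψ s₀ > 0, else h constant
  have hψs₀pos : 0 < ψ s₀ := by
    rcases lt_or_eq_of_le (hψnonneg s₀ hs₀S hs₀pos.le) with hlt | heq0
    · exact hlt
    · exfalso
      -- ψ vanishes on S
      have hzero : ∀ t ∈ S, ψ t = 0 := by
        intro t ht
        obtain ⟨n, hn⟩ := exists_nat_gt (|t| / s₀)
        have hns : (n : ℝ) * s₀ ∈ S := by
          have := zsmul_mem hs₀S (n : ℤ)
          simpa [zsmul_eq_mul] using this
        have hbig : |t| < n * s₀ := by
          rwa [div_lt_iff₀ hs₀pos] at hn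
        have h1 : ψ t ≤ ψ ((n : ℝ) * s₀) :=
          hmonoψ t ht _ hns (le_trans (le_abs_self t) hbig.le)
        have h2 : ψ (-((n : ℝ) * s₀)) ≤ ψ t := by
          apply hmonoψ _ (S.neg_mem hns) t ht
          have := neg_abs_le t
          linarith
        rw [hnat n s₀ hs₀S, ← heq0] at h1
        rw [hneg _ hns, hnat n s₀ hs₀S, ← heq0] at h2
        simp at h1 h2
        linarith
      -- h constant
      apply hnc
      refine ⟨h 0, fun x => ?_⟩
      obtain ⟨t, htS, ht⟩ : ∃ t ∈ S, t ∈ Set.Ioo x (x + 1) :=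
        hdense.exists_between (by linarith)
      obtain ⟨t', ht'S, ht'⟩ : ∃ t' ∈ S, t' ∈ Set.Ioo (-x) (-x + 1) :=
        hdense.exists_between (by linarith)
      have e1 := heq 0 t htS
      have e2 := heq x t' ht'S
      rw [hzero t htS] at e1
      rw [hzero t' ht'S] at e2
      simp at e1 e2
      have l1 : h x ≤ h t := hmono ht.1.le
      have l2 : h 0 ≤ h (x + t') := hmono (by linarith [ht'.1])
      rw [e1] at l1
      rw [e2] at l2
      linarith
  refine ⟨hadd, ψ s₀ / s₀, le_of_lt (div_pos hψs₀pos hs₀pos), ?_⟩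
  -- key claim: never ψ s < λ s
  have key : ∀ s ∈ S, ¬ ψ s < ψ s₀ / s₀ * s := by
    intro s hs hlt
    have hdiv : ψ s / ψ s₀ < s / s₀ := by
      rw [div_lt_div_iff₀ hψs₀pos hs₀pos]
      rw [div_mul_eq_mul_div, lt_div_iff₀ hs₀pos] at hlt
      linarith
    obtain ⟨q, hq1, hq2⟩ := exists_rat_btwn hdiv
    have hqden : (0 : ℝ) < (q.den : ℝ) := by positivity
    have hqcast : (q : ℝ) = (q.num : ℝ) / (q.den : ℝ) := by
      rw [Rat.cast_def]
    rw [hqcast] at hq1 hq2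
    rw [div_lt_div_iff₀ hψs₀pos hqden] at hq1
    rw [div_lt_div_iff₀ hqden hs₀pos] at hq2
    -- q.num * s₀ < q.den * s, so ψ monotone gives q.num * ψ s₀ ≤ q.den * ψ s
    have hm1 : (q.num : ℝ) * s₀ ∈ S := by
      have := zsmul_mem hs₀S q.num
      simpa [zsmul_eq_mul] using this
    have hm2 : (q.den : ℝ) * s ∈ S := by
      have := zsmul_mem hs (q.den : ℤ)
      simpa [zsmul_eq_mul] using this
    have hle : ψ ((q.num : ℝ) * s₀) ≤ ψ ((q.den : ℝ) * s) := by
      apply hmonoψ _ hm1 _ hm2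
      nlinarith
    rw [hint q.num s₀ hs₀S] at hle
    have := hint (q.den : ℤ) s hs
    push_cast at this
    rw [this] at hle
    nlinarith
  intro s hs
  by_contra hne
  rcases lt_or_gt_of_ne hne with hlt | hgt
  · exact key s hs hlt
  · apply key (-s) (S.neg_mem hs)
    rw [hneg s hs]
    rw [mul_neg]
    linarith
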